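/- arXiv:0709.2868 — 2 statements merged into one kernel-verified Lean document; each statement's English description precedes it below -/
import Mathlib

section
/- Let G be a group acting faithfully and transitively on a finite set Ω of prime cardinality p ≥ 5, with |G| > p. Then G is solvable if and only if G is a Frobenius group on Ω, i.e., some point stabilizer is nontrivial and every non-identity element of G fixes at most one point of Ω. -/
/-!
If `G` is solvable, a minimal nontrivial normal subgroup `N` is abelian; in prime degree it is
transitive, hence regular of order `p`. An element `g` fixing both `α` and `n • α` (with `n ∈ N`)
commutes with `n` by regularity, hence centralizes `N = ⟨n⟩`; but an element centralizing a
transitive group and fixing a point is trivial. Nontrivial stabilizers come from `|G| > p`.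

Conversely, in a Frobenius group Burnside's lemma counts exactly `p` elements that are the
identity or fixed-point-free. A cyclic `p`-group acting on `p` points with a fixed point acts
trivially, so a Sylow `p`-subgroup `P` consists of such elements and is therefore this set: `P` is
normal of order `p`, it contains its centralizer, and `G / P` embeds into the abelian `Aut P`.
-/

open MulAction Subgroup

theorem Group.IsSolvable.exists_normal_isMulCommutative {G : Type*} [Group G] [Finite G]
    [Group.IsSolvable G] [Nontrivial G] :
    ∃ N : Subgroup G, N.Normal ∧ N ≠ ⊥ ∧ IsMulCommutative N := by
  obtain ⟨N, ⟨hNnormal, hN⟩, hmin⟩ :=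
    (Set.toFinite {N : Subgroup G | N.Normal ∧ N ≠ ⊥}).exists_minimal
      ⟨⊤, inferInstance, top_ne_bot⟩
  have hcomm : ⁅N, N⁆ = ⊥ := by
    by_contra hne
    have hlt := Group.IsSolvable.commutator_lt_of_ne_bot hN
    exact hlt.not_ge (hmin ⟨commutator_normal N N, hne⟩ hlt.le)
  exact ⟨N, hNnormal, hN, le_centralizer_iff_isMulCommutative.mp
    (commutator_eq_bot_iff_le_centralizer.mp hcomm)⟩

theorem Group.isSolvable_of_isCyclic_of_centralizer_le {G : Type*} [Group G] (N : Subgroup G)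
    [N.Normal] [IsCyclic N] (h : centralizer (N : Set G) ≤ N) : Group.IsSolvable G := by
  have : Group.IsSolvable N := Group.isSolvable_of_comm IsCyclic.commGroup.mul_comm
  have : Group.IsSolvable (MulAut N) :=
    Group.isSolvable_of_isSolvable_injective (f := (IsCyclic.mulAutMulEquiv N).toMonoidHom)
      (IsCyclic.mulAutMulEquiv N).injective
  refine Group.isSolvable_of_ker_le_range N.subtype (MulAut.conjNormal (H := N)) fun g hg ↦ ?_
  rw [range_subtype]
  refine h (mem_centralizer_iff.mpr fun n hn ↦ ?_)
  have : g * n * g⁻¹ = n := by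
    rw [← MulAut.conjNormal_apply g ⟨n, hn⟩, MonoidHom.mem_ker.mp hg]
    rfl
  exact (mul_inv_eq_iff_eq_mul.mp this).symm

namespace MulAction

variable {G Ω : Type*} [Group G] [MulAction G Ω]

theorem eq_one_of_mem_centralizer_of_smul_eq [FaithfulSMul G Ω] {H : Subgroup G}
    [IsPretransitive H Ω] {c : G} (hc : c ∈ centralizer (H : Set G)) {α : Ω}
    (hα : c • α = α) : c = 1 := by
  refine eq_of_smul_eq_smul (α := Ω) fun β ↦ ?_
  obtain ⟨h, rfl⟩ := exists_smul_eq H α β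
  rw [Subgroup.smul_def, one_smul, smul_smul, ← mem_centralizer_iff.mp hc h h.2, mul_smul, hα]

theorem smul_eq_self_iff_of_isMulCommutative [FaithfulSMul G Ω] {H : Subgroup G}
    [IsPretransitive H Ω] [IsMulCommutative H] {h : G} (hh : h ∈ H) {α : Ω} :
    h • α = α ↔ h = 1 :=
  ⟨eq_one_of_mem_centralizer_of_smul_eq (le_centralizer H hh), fun h1 ↦ h1 ▸ one_smul G α⟩

theorem isPretransitive_of_normal_of_prime_card [IsPretransitive G Ω] [FaithfulSMul G Ω]
    (hp : (Nat.card Ω).Prime) {N : Subgroup G} [N.Normal] (hN : N ≠ ⊥) :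
    IsPretransitive N Ω := by
  have := IsPreprimitive.of_prime_card (G := G) hp
  refine IsQuasiPreprimitive.isPretransitive_of_normal fun hfix ↦ hN ?_
  refine (eq_bot_iff_forall N).mpr fun n hn ↦ eq_of_smul_eq_smul (α := Ω) fun α ↦ ?_
  rw [one_smul]
  exact mem_fixedPoints.mp (hfix ▸ Set.mem_univ α) ⟨n, hn⟩

theorem eq_one_of_smul_eq_of_isPGroup [FaithfulSMul G Ω] {p : ℕ} [Fact p.Prime]
    (hΩ : Nat.card Ω = p) {H : Subgroup G} (hH : IsPGroup p H) {h : G} (hh : h ∈ H) {α : Ω}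
    (hα : h • α = α) : h = 1 := by
  have : Finite Ω := Nat.finite_of_card_ne_zero (hΩ ▸ (Fact.out : p.Prime).ne_zero)
  have hK : IsPGroup p (zpowers h) := hH.to_le (zpowers_le.mpr hh)
  have hα' : α ∈ fixedPoints (zpowers h) Ω := by
    rintro ⟨_, k, rfl⟩
    exact mem_fixedBy_zpow hα k
  -- the number of fixed points is `≡ p ≡ 0 [MOD p]`, positive and at most `p`
  have hdvd : p ∣ (fixedPoints (zpowers h) Ω).ncard := by
    have := (hK.card_modEq_card_fixedPoints Ω).symm
    rw [hΩ, Nat.card_coe_set_eq] at this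
    exact Nat.modEq_zero_iff_dvd.mp (this.trans (Nat.modEq_zero_iff_dvd.mpr dvd_rfl))
  have hfix : fixedPoints (zpowers h) Ω = Set.univ := by
    rw [Set.eq_univ_iff_ncard, hΩ]
    exact le_antisymm (hΩ ▸ Set.ncard_le_card _)
      (Nat.le_of_dvd ((Set.ncard_pos).mpr ⟨α, hα'⟩) hdvd)
  refine eq_of_smul_eq_smul (α := Ω) fun β ↦ ?_
  rw [one_smul]
  exact mem_fixedPoints.mp (hfix ▸ Set.mem_univ β) ⟨h, mem_zpowers h⟩

theorem exists_ne_one_smul_eq_of_card_lt [Fintype G] [Fintype Ω] [Nonempty Ω]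
    (h : Fintype.card Ω < Fintype.card G) : ∃ (α : Ω) (g : G), g ≠ 1 ∧ g • α = α := by
  let α : Ω := Classical.arbitrary Ω
  obtain ⟨g, g', hne, heq⟩ := Fintype.exists_ne_map_eq_of_card_lt (· • α) h
  refine ⟨α, g'⁻¹ * g, fun h1 ↦ hne (inv_mul_eq_one.mp h1).symm, ?_⟩
  rw [mul_smul, heq, inv_smul_smul]

theorem card_eq_of_isMulCommutative [FaithfulSMul G Ω] [Nonempty Ω] (H : Subgroup G)
    [IsPretransitive H Ω] [IsMulCommutative H] : Nat.card H = Nat.card Ω := by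
  let α : Ω := Classical.arbitrary Ω
  have hα : stabilizer H α = ⊥ := (eq_bot_iff_forall _).mpr fun h hh ↦
    Subtype.ext ((smul_eq_self_iff_of_isMulCommutative h.2).mp hh)
  rw [← index_stabilizer_of_transitive H α, hα, index_bot]

theorem commute_of_smul_eq_of_smul_smul_eq [FaithfulSMul G Ω] {N : Subgroup G} [N.Normal]
    [IsPretransitive N Ω] [IsMulCommutative N] {g n : G} (hn : n ∈ N) {α : Ω}
    (hgα : g • α = α) (hgnα : g • n • α = n • α) : Commute g n := by
  have hgα' : g⁻¹ • α = α := inv_smul_eq_iff.mpr hgα.symm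
  have hfix : (n⁻¹ * (g * n * g⁻¹)) • α = α := by
    simp only [mul_smul, hgα', hgnα, inv_smul_smul]
  have hmem : n⁻¹ * (g * n * g⁻¹) ∈ N := N.mul_mem (N.inv_mem hn) (Normal.conj_mem ‹_› n hn g)
  have := inv_mul_eq_one.mp ((smul_eq_self_iff_of_isMulCommutative hmem).mp hfix)
  exact (eq_mul_inv_iff_mul_eq.mp this).symm

theorem fixedBy_subsingleton_of_normal_isMulCommutative [FaithfulSMul G Ω]
    (hp : (Nat.card Ω).Prime) {N : Subgroup G} [N.Normal] [IsPretransitive N Ω]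
    [IsMulCommutative N] {g : G} (hg : g ≠ 1) : (fixedBy Ω g).Subsingleton := by
  intro α hα β hβ
  obtain ⟨⟨n, hn⟩, rfl⟩ := exists_smul_eq N α β
  rw [Subgroup.mk_smul] at hβ ⊢
  by_contra hne
  have hn1 : n ≠ 1 := fun h1 ↦ hne (by rw [h1, one_smul])
  have : Nonempty Ω := ⟨α⟩
  -- `N` has prime order, so it is generated by `n`, which commutes with `g`
  have hNΩ := card_eq_of_isMulCommutative (Ω := Ω) N
  have : Finite N := Nat.finite_of_card_ne_zero (hNΩ ▸ hp.ne_zero)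
  have hNn : N = zpowers n := by
    have hdvd : orderOf n ∣ Nat.card Ω := hNΩ ▸ N.orderOf_dvd_natCard hn
    refine (eq_of_le_of_card_ge (zpowers_le.mpr hn) ?_).symm
    rw [Nat.card_zpowers, hNΩ,
      (hp.eq_one_or_self_of_dvd _ hdvd).resolve_left (mt orderOf_eq_one_iff.mp hn1)]
  have hcomm := commute_of_smul_eq_of_smul_smul_eq hn hα hβ
  refine hg (eq_one_of_mem_centralizer_of_smul_eq (H := N) (mem_centralizer_iff.mpr ?_) hα)
  rw [hNn]
  rintro _ ⟨k, rfl⟩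
  exact (hcomm.zpow_right k).eq.symm

def frobeniusKernel (G Ω : Type*) [Group G] [MulAction G Ω] : Set G :=
  {g | g = 1 ∨ ∀ α : Ω, g • α ≠ α}

theorem conj_mem_frobeniusKernel {g : G} (hg : g ∈ frobeniusKernel G Ω) (h : G) :
    h * g * h⁻¹ ∈ frobeniusKernel G Ω := by
  refine hg.imp (fun hg1 ↦ by rw [hg1, mul_one, mul_inv_cancel]) fun hg α hα ↦ hg (h⁻¹ • α) ?_
  rw [mul_smul, mul_smul] at hα
  exact eq_inv_smul_iff.mpr hα

theorem ncard_frobeniusKernel [Finite G] [Finite Ω] [IsPretransitive G Ω] [Nonempty Ω]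
    (hfrob : ∀ g : G, g ≠ 1 → (fixedBy Ω g).Subsingleton) :
    (frobeniusKernel G Ω).ncard = Nat.card Ω := by
  classical
  have := Fintype.ofFinite G
  have := Fintype.ofFinite Ω
  have hterm : ∀ g : G, Fintype.card (fixedBy Ω g) =
      (if g ∈ (frobeniusKernel G Ω)ᶜ then 1 else 0) + (if g = 1 then Fintype.card Ω else 0) := by
    intro g
    by_cases hg : g = 1
    · simp [hg, frobeniusKernel]
    by_cases hfree : ∀ α : Ω, g • α ≠ α
    · simp [hg, hfree, frobeniusKernel]
    push Not at hfree
    obtain ⟨α, hα⟩ := hfree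
    have hgK : g ∉ frobeniusKernel G Ω := fun hgK ↦ hgK.elim hg (· α hα)
    simp [hg, hgK, (hfrob g hg).eq_singleton_of_mem hα]
  have horbits : Fintype.card (orbitRel.Quotient G Ω) = 1 := by
    have := (pretransitive_iff_subsingleton_quotient G Ω).mp ‹_›
    exact Fintype.card_eq_one_iff.mpr ⟨⟦Classical.arbitrary Ω⟧, fun _ ↦ Subsingleton.elim _ _⟩
  have hburnside := sum_card_fixedBy_eq_card_orbits_mul_card_group G Ω
  simp only [hterm, Finset.sum_add_distrib, Finset.sum_ite_eq', Finset.sum_boole,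
    Finset.mem_univ, if_true, horbits, one_mul] at hburnside
  have := Set.ncard_add_ncard_compl (frobeniusKernel G Ω)
  rw [Set.ncard_eq_toFinset_card' (frobeniusKernel G Ω)ᶜ, ← Set.filter_mem_univ_eq_toFinset,
    Nat.card_eq_fintype_card] at this
  rw [Nat.card_eq_fintype_card]
  simp only [Nat.cast_id] at hburnside
  omega

theorem _root_.Sylow.coe_eq_frobeniusKernel [Finite G] [Finite Ω] [FaithfulSMul G Ω]
    [IsPretransitive G Ω] {p : ℕ} [Fact p.Prime] (hΩ : Nat.card Ω = p)
    (hfrob : ∀ g : G, g ≠ 1 → (fixedBy Ω g).Subsingleton) (P : Sylow p G) :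
    ((P : Subgroup G) : Set G) = frobeniusKernel G Ω := by
  have : Nonempty Ω := (Nat.card_pos_iff.mp (hΩ ▸ (Fact.out : p.Prime).pos)).1
  have hsub : ((P : Subgroup G) : Set G) ⊆ frobeniusKernel G Ω := fun x hx ↦ by
    refine or_iff_not_imp_right.mpr fun h ↦ ?_
    push Not at h
    obtain ⟨α, hα⟩ := h
    exact eq_one_of_smul_eq_of_isPGroup hΩ P.isPGroup' hx hα
  have hdvd : p ∣ Nat.card G := by
    rw [← hΩ, ← index_stabilizer_of_transitive G (Classical.arbitrary Ω)]
    exact index_dvd_card _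
  refine Set.eq_of_subset_of_ncard_le hsub ?_
  rw [ncard_frobeniusKernel hfrob, hΩ, ← Nat.card_coe_set_eq]
  exact Nat.le_of_dvd Nat.card_pos (P.dvd_card_of_dvd_card hdvd)

theorem isSolvable_of_fixedBy_subsingleton [Finite G] [Finite Ω] [FaithfulSMul G Ω]
    [IsPretransitive G Ω] (hp : (Nat.card Ω).Prime)
    (hfrob : ∀ g : G, g ≠ 1 → (fixedBy Ω g).Subsingleton) : Group.IsSolvable G := by
  have : Fact (Nat.card Ω).Prime := ⟨hp⟩
  obtain ⟨P⟩ : Nonempty (Sylow (Nat.card Ω) G) := inferInstance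
  have hPK := P.coe_eq_frobeniusKernel rfl hfrob
  have : (P : Subgroup G).Normal := ⟨fun n hn g ↦ by
    rw [← SetLike.mem_coe, hPK] at hn ⊢
    exact conj_mem_frobeniusKernel hn g⟩
  have hPcard : Nat.card P = Nat.card Ω := by
    have : Nonempty Ω := (Nat.card_pos_iff.mp hp.pos).1
    exact (Nat.card_coe_set_eq _).trans (hPK ▸ ncard_frobeniusKernel hfrob)
  have : IsCyclic P := isCyclic_of_prime_card hPcard
  have : IsPretransitive P Ω := isPretransitive_of_normal_of_prime_card hp
    fun hbot ↦ hp.ne_one (hPcard ▸ hbot ▸ Subgroup.card_bot)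
  refine Group.isSolvable_of_isCyclic_of_centralizer_le P fun c hc ↦ ?_
  rw [← SetLike.mem_coe, hPK]
  refine or_iff_not_imp_right.mpr fun h ↦ ?_
  push Not at h
  obtain ⟨α, hα⟩ := h
  exact eq_one_of_mem_centralizer_of_smul_eq hc hα

end MulAction

theorem solvable_iff_frobenius_of_prime_degree_general
    (G : Type*) [Group G] [Fintype G] (Ω : Type*) [Fintype Ω]
    [MulAction G Ω] [FaithfulSMul G Ω] (htrans : MulAction.IsPretransitive G Ω)
    (p : ℕ) (hp : p.Prime) (hΩ : Fintype.card Ω = p)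
    (hG : p < Fintype.card G) :
    IsSolvable G ↔
      ((∃ (α : Ω) (g : G), g ≠ 1 ∧ g • α = α) ∧
        ∀ g : G, g ≠ 1 → ∀ α β : Ω, g • α = α → g • β = β → α = β) := by
  have := htrans
  have hp' : (Nat.card Ω).Prime := Nat.card_eq_fintype_card (α := Ω) ▸ hΩ ▸ hp
  constructor
  · intro hsolv
    have : Group.IsSolvable G := hsolv
    have : Nonempty Ω := Fintype.card_pos_iff.mp (hΩ ▸ hp.pos)
    have : Nontrivial G := Fintype.one_lt_card_iff_nontrivial.mp (hp.one_lt.trans hG)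
    obtain ⟨N, _, hNbot, _⟩ := Group.IsSolvable.exists_normal_isMulCommutative (G := G)
    have := isPretransitive_of_normal_of_prime_card hp' hNbot
    exact ⟨exists_ne_one_smul_eq_of_card_lt (hΩ ▸ hG),
      fun g hg α β hα hβ ↦ fixedBy_subsingleton_of_normal_isMulCommutative (N := N) hp' hg hα hβ⟩
  · rintro ⟨-, hfrob⟩
    exact isSolvable_of_fixedBy_subsingleton hp' fun g hg α hα β hβ ↦ hfrob g hg α β hα hβ

/-- Let `G` act faithfully and transitively on a finite set `Ω` of prime cardinality
`p ≥ 5`, with `|G| > p`. Then `G` is solvable if and only if `G` is a Frobenius group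
on `Ω`: some point stabilizer is nontrivial and every non-identity element of `G`
fixes at most one point of `Ω`. -/
theorem solvable_iff_frobenius_of_prime_degree
    (G : Type*) [Group G] [Fintype G] (Ω : Type*) [Fintype Ω]
    [MulAction G Ω] [FaithfulSMul G Ω] (htrans : MulAction.IsPretransitive G Ω)
    (p : ℕ) (hp : p.Prime) (hp5 : 5 ≤ p) (hΩ : Fintype.card Ω = p)
    (hG : p < Fintype.card G) :
    IsSolvable G ↔
      ((∃ (α : Ω) (g : G), g ≠ 1 ∧ g • α = α) ∧
        ∀ g : G, g ≠ 1 → ∀ α β : Ω, g • α = α → g • β = β → α = β) :=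
  solvable_iff_frobenius_of_prime_degree_general G Ω htrans p hp hΩ hG
end

section
/- Let G be a group acting faithfully and transitively on a finite set Ω of prime cardinality p ≥ 5, with |G| > p. Then G is solvable if and only if there is an injective group homomorphism from G into the one-dimensional affine group AGL₁(p), realized as the semidirect product of the additive group ℤ/pℤ by its unit group (ℤ/pℤ)ˣ acting by multiplication. -/
/-- The action of the unit group `(ℤ/pℤ)ˣ` on the additive group `ℤ/pℤ` (written
multiplicatively) by multiplication. The corresponding semidirect product
`Multiplicative (ZMod p) ⋊[zmodMulAut p] (ZMod p)ˣ` is the one-dimensional affine group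
`AGL₁(p)`. -/
def zmodMulAut (p : ℕ) : (ZMod p)ˣ →* MulAut (Multiplicative (ZMod p)) where
  toFun u := AddEquiv.toMultiplicative (DistribMulAction.toAddAut (ZMod p)ˣ (ZMod p) u)
  map_one' := by ext x; exact congrArg Multiplicative.ofAdd (one_smul (ZMod p)ˣ x.toAdd)
  map_mul' u v := by ext x; exact congrArg Multiplicative.ofAdd (mul_smul u v x.toAdd)

/-!
A solvable group `G ≠ 1` has a nontrivial abelian normal subgroup `N`, the last nontrivial term
of its derived series. A transitive action of prime degree is primitive, so `N` is transitive;
being abelian and faithful it is then regular, hence `N ≅ ℤ/p`. Transporting the action along the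
orbit map `ℤ/p ≅ N → Ω` makes `N` act by translations. Each `g ∈ G` normalizes `N`, so it conjugates
translations into translations, and a permutation of `ℤ/p` with this property is an affine map
`ζ ↦ αζ + β`. As `AGL₁(p)` acts faithfully on `ℤ/p`, this embeds `G` into `AGL₁(p)`. Conversely
`AGL₁(p)` is an extension of `ℤ/p` by `(ℤ/p)ˣ`, so it and all its subgroups are solvable.
-/

open MulAction

instance SemidirectProduct.isSolvable {N H : Type*} [Group N] [Group H] {φ : H →* MulAut N}
    [Group.IsSolvable N] [Group.IsSolvable H] : Group.IsSolvable (N ⋊[φ] H) :=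
  Group.isSolvable_of_ker_le_range inl rightHom range_inl_eq_ker_rightHom.ge

theorem Group.IsSolvable.exists_normal_isMulCommutative_ne_bot (G : Type*) [Group G]
    [Nontrivial G] [Group.IsSolvable G] :
    ∃ N : Subgroup G, N.Normal ∧ N ≠ ⊥ ∧ IsMulCommutative N := by
  classical
  have hex : ∃ k, derivedSeries G k = ⊥ := IsSolvable.solvable
  obtain ⟨k, hk⟩ : ∃ k, Nat.find hex = k + 1 := Nat.exists_eq_add_one.mpr <|
    Nat.pos_of_ne_zero fun h => top_ne_bot (derivedSeries_zero G ▸ h ▸ Nat.find_spec hex)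
  refine ⟨derivedSeries G k, derivedSeries_normal G k, Nat.find_min hex (by omega), ?_⟩
  rw [← Subgroup.commutator_self_eq_bot_iff, ← derivedSeries_succ, ← hk]
  exact Nat.find_spec hex

theorem MulAction.nontrivial_of_isPretransitive (G X : Type*) [Group G] [MulAction G X]
    [IsPretransitive G X] [Nontrivial X] : Nontrivial G := by
  obtain ⟨x, y, hxy⟩ := exists_pair_ne X
  obtain ⟨g, rfl⟩ := exists_smul_eq G x y
  exact nontrivial_of_ne g 1 fun (hg : g = 1) => hxy (by rw [hg, one_smul])

theorem MulAction.fixedPoints_ne_univ {G X : Type*} [Group G] [MulAction G X]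
    [FaithfulSMul G X] [Nontrivial G] : fixedPoints G X ≠ Set.univ := fun h => by
  obtain ⟨g, hg⟩ := exists_ne (1 : G)
  exact hg (eq_of_smul_eq_smul (α := X) fun x =>
    (one_smul G x).symm ▸ (Set.eq_univ_iff_forall.mp h x) g)

theorem MulAction.bijective_smul_of_isMulCommutative {H X : Type*} [Group H] [MulAction H X]
    [IsPretransitive H X] [FaithfulSMul H X] [IsMulCommutative H] (x : X) :
    Function.Bijective fun h : H => h • x := by
  refine ⟨fun h h' (hx : h • x = h' • x) => ?_, fun y => exists_smul_eq H x y⟩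
  refine eq_of_smul_eq_smul (α := X) fun y => ?_
  obtain ⟨k, rfl⟩ := exists_smul_eq H x y
  rw [smul_smul, smul_smul, mul_comm' h, mul_comm' h', mul_smul, mul_smul, hx]

theorem MulAction.exists_injective_monoidHom_of_forall_exists_smul_eq {G H X Y : Type*}
    [Group G] [Group H] [MulAction G X] [MulAction H Y] [FaithfulSMul G X] [FaithfulSMul H Y]
    (e : Y ≃ X) (h : ∀ g : G, ∃ a : H, ∀ y, e (a • y) = g • e y) :
    ∃ φ : G →* H, Function.Injective φ := by
  choose φ hφ using h
  refine ⟨MonoidHom.mk' φ fun g g' => eq_of_smul_eq_smul (α := Y) fun y => e.injective ?_,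
    fun g g' hgg' => eq_of_smul_eq_smul (α := X) fun x => ?_⟩
  · rw [hφ, mul_smul, mul_smul, hφ, hφ]
  · rw [← e.apply_symm_apply x, ← hφ, ← hφ]
    exact congrArg _ (congrArg (· • _) hgg')

theorem ZMod.addMonoidHom_apply_eq_mul {n : ℕ} (f : ZMod n →+ ZMod n) (x : ZMod n) :
    f x = f 1 * x := by
  rw [mul_comm, ← x.intCast_zmod_cast, ← zsmul_eq_mul, ← map_zsmul, zsmul_one]

theorem zmodMulAut_apply {n : ℕ} (u : (ZMod n)ˣ) (x : Multiplicative (ZMod n)) :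
    (zmodMulAut n u x).toAdd = u * x.toAdd := rfl

abbrev AGL₁ (n : ℕ) : Type := Multiplicative (ZMod n) ⋊[zmodMulAut n] (ZMod n)ˣ

namespace AGL₁

variable {n : ℕ}

instance : MulAction (AGL₁ n) (ZMod n) where
  smul a x := a.right * x + a.left.toAdd
  one_smul x := show (1 : AGL₁ n).right * x + (1 : AGL₁ n).left.toAdd = x by simp
  mul_smul a b x := by
    change (a * b).right * x + (a * b).left.toAdd =
      a.right * (b.right * x + b.left.toAdd) + a.left.toAdd
    simp only [SemidirectProduct.mul_left, SemidirectProduct.mul_right, toAdd_mul,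
      zmodMulAut_apply, Units.val_mul]
    ring

theorem smul_def (a : AGL₁ n) (x : ZMod n) : a • x = a.right * x + a.left.toAdd := rfl

instance : FaithfulSMul (AGL₁ n) (ZMod n) where
  eq_of_smul_eq_smul {a b} h := by
    have h0 := h 0
    have h1 := h 1
    simp only [smul_def, mul_zero, zero_add, mul_one] at h0 h1
    rw [h0, add_left_inj] at h1
    exact SemidirectProduct.ext (Multiplicative.toAdd.injective h0) (Units.ext h1)

theorem exists_smul_eq_of_map_add (σ : ZMod n → ZMod n) (hsurj : Function.Surjective σ)
    (h : ∀ c, ∃ c', ∀ x, σ (x + c) = σ x + c') : ∃ a : AGL₁ n, ∀ x, a • x = σ x := by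
  have hadd (x c : ZMod n) : σ (x + c) = σ x + (σ c - σ 0) := by
    obtain ⟨c', hc'⟩ := h c
    have hc0 := hc' 0
    rw [zero_add] at hc0
    rw [hc', hc0]
    ring
  let f : ZMod n →+ ZMod n := AddMonoidHom.mk' (fun c => σ c - σ 0) fun c d => by
    simp only [hadd]
    ring
  have hσ (x : ZMod n) : σ x = f 1 * x + σ 0 := by
    rw [← ZMod.addMonoidHom_apply_eq_mul]
    simp [f]
  obtain ⟨y, hy⟩ := hsurj (σ 0 + 1)
  have hu : f 1 * y = 1 := by
    rw [hσ] at hy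
    linear_combination hy
  exact ⟨⟨.ofAdd (σ 0), Units.mkOfMulEqOne _ _ hu⟩, fun x => by rw [smul_def, hσ x]; rfl⟩

theorem exists_injective_monoidHom_of_regular_normal {G Ω : Type*} [Group G] [MulAction G Ω]
    [FaithfulSMul G Ω] (N : Subgroup G) [N.Normal] (ψ : Multiplicative (ZMod n) ≃* N) (ω₀ : Ω)
    (hreg : Function.Bijective fun m : N => m • ω₀) :
    ∃ φ : G →* AGL₁ n, Function.Injective φ := by
  let e : ZMod n ≃ Ω := (Multiplicative.ofAdd.trans ψ.toEquiv).trans (Equiv.ofBijective _ hreg)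
  have he_add (x c : ZMod n) : e (x + c) = ψ (.ofAdd c) • e x := by
    change ψ (.ofAdd (x + c)) • ω₀ = ψ (.ofAdd c) • ψ (.ofAdd x) • ω₀
    rw [add_comm, ofAdd_add, map_mul, mul_smul]
  refine exists_injective_monoidHom_of_forall_exists_smul_eq e fun g => ?_
  have hconj (c : ZMod n) : ∃ c', ∀ x, e.symm (g • e (x + c)) = e.symm (g • e x) + c' := by
    let m : N := ⟨g * ψ (.ofAdd c) * g⁻¹, ‹N.Normal›.conj_mem _ (ψ _).2 g⟩
    refine ⟨(ψ.symm m).toAdd, fun x => ?_⟩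
    rw [e.symm_apply_eq, he_add, he_add, e.apply_symm_apply, ofAdd_toAdd, ψ.apply_symm_apply,
      Subgroup.smul_def, Subgroup.smul_def]
    simp only [m, mul_smul, inv_smul_smul]
  obtain ⟨a, ha⟩ := exists_smul_eq_of_map_add (fun x => e.symm (g • e x))
    (e.symm.surjective.comp ((MulAction.bijective g).surjective.comp e.surjective)) hconj
  exact ⟨a, fun x => by rw [ha, e.apply_symm_apply]⟩

end AGL₁

theorem solvable_iff_embeds_in_AGL1_of_prime_degree_general
    (G : Type*) [Group G] (Ω : Type*) [Fintype Ω]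
    [MulAction G Ω] [FaithfulSMul G Ω] (htrans : MulAction.IsPretransitive G Ω)
    (p : ℕ) (hp : p.Prime) (hΩ : Fintype.card Ω = p) :
    IsSolvable G ↔
      ∃ φ : G →* Multiplicative (ZMod p) ⋊[zmodMulAut p] (ZMod p)ˣ,
        Function.Injective φ := by
  refine ⟨fun hG => ?_, fun ⟨φ, hφ⟩ => Group.isSolvable_of_isSolvable_injective hφ⟩
  have : Group.IsSolvable G := hG
  have hcard : Nat.card Ω = p := Nat.card_eq_fintype_card.trans hΩ
  have : Nontrivial Ω := Finite.one_lt_card_iff_nontrivial.mp (hcard ▸ hp.one_lt)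
  have := nontrivial_of_isPretransitive G Ω
  obtain ⟨N, hN, hNbot, hNcomm⟩ := Group.IsSolvable.exists_normal_isMulCommutative_ne_bot G
  have : IsPreprimitive G Ω := IsPreprimitive.of_prime_card (hcard ▸ hp)
  have : Nontrivial N := N.nontrivial_iff_ne_bot.mpr hNbot
  have : IsPretransitive N Ω := IsQuasiPreprimitive.isPretransitive_of_normal fixedPoints_ne_univ
  obtain ⟨ω₀⟩ : Nonempty Ω := inferInstance
  have hreg := bijective_smul_of_isMulCommutative (H := N) ω₀
  have hNcard : Nat.card N = p := (Nat.card_congr (Equiv.ofBijective _ hreg)).trans hcard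
  have : IsCyclic N := isCyclic_of_prime_card (hp := ⟨hp⟩) hNcard
  subst hNcard
  exact AGL₁.exists_injective_monoidHom_of_regular_normal N (zmodCyclicMulEquiv ‹_›) ω₀ hreg

/-- Let `G` act faithfully and transitively on a finite set `Ω` of prime cardinality
`p ≥ 5`, with `|G| > p`. Then `G` is solvable if and only if `G` embeds into the
one-dimensional affine group `AGL₁(p) = (ℤ/pℤ) ⋊ (ℤ/pℤ)ˣ`. -/
theorem solvable_iff_embeds_in_AGL1_of_prime_degree
    (G : Type*) [Group G] [Fintype G] (Ω : Type*) [Fintype Ω]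
    [MulAction G Ω] [FaithfulSMul G Ω] (htrans : MulAction.IsPretransitive G Ω)
    (p : ℕ) (hp : p.Prime) (hp5 : 5 ≤ p) (hΩ : Fintype.card Ω = p)
    (hG : p < Fintype.card G) :
    IsSolvable G ↔
      ∃ φ : G →* Multiplicative (ZMod p) ⋊[zmodMulAut p] (ZMod p)ˣ,
        Function.Injective φ :=
  solvable_iff_embeds_in_AGL1_of_prime_degree_general G Ω htrans p hp hΩ
end
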